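/- If u ∈ ℝ³ satisfies u₂ ≠ 0 and u₃ ≠ 0, then for every s ∈ ℝ³, the affine plane {p ∈ ℝ³ : ⟨u, p − s⟩ = 0} with normal u passing through s contains at most N₁·min(N₂, N₃) points of G. -/

import Mathlib

open scoped RealInnerProductSpace

noncomputable def grid3 (L d : Fin 3 → ℝ) (N : Fin 3 → ℕ) : Set (EuclideanSpace ℝ (Fin 3)) :=
  {x | ∃ (ε : Fin 3 → ℝ) (q : Fin 3 → ℤ),
    (∀ i, ε i = 1 ∨ ε i = -1) ∧
    (∀ i, 0 ≤ q i ∧ q i < (N i / 2 : ℕ)) ∧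
    (∀ i, x i = ε i * d i + 2 * (q i : ℝ) * L i)}

/-! A plane whose normal has a nonzero `k`-th coordinate is a graph over the other coordinates,
so a planar set of grid points projects injectively onto two coordinate axes of the grid; each
axis carries at most `Nᵢ` grid coordinates. -/

noncomputable def gridCoords (L d : ℝ) (n : ℕ) : Finset ℝ :=
  (({1, -1} : Finset ℝ) ×ˢ Finset.Ico (0 : ℤ) (n / 2 : ℕ)).image
    fun e => e.1 * d + 2 * (e.2 : ℝ) * L

lemma card_gridCoords_le (L d : ℝ) (n : ℕ) : (gridCoords L d n).card ≤ n :=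
  calc (gridCoords L d n).card
      ≤ (({1, -1} : Finset ℝ) ×ˢ Finset.Ico (0 : ℤ) (n / 2 : ℕ)).card := Finset.card_image_le
    _ ≤ 2 * (n / 2) := by
      rw [Finset.card_product, Int.card_Ico, sub_zero, Int.toNat_natCast]
      exact Nat.mul_le_mul_right _ (Finset.card_le_two)
    _ ≤ n := Nat.mul_div_le n 2

lemma mem_gridCoords_of_mem_grid3 {L d : Fin 3 → ℝ} {N : Fin 3 → ℕ}
    {x : EuclideanSpace ℝ (Fin 3)} (hx : x ∈ grid3 L d N) (m : Fin 3) :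
    x m ∈ gridCoords (L m) (d m) (N m) := by
  obtain ⟨ε, q, hε, hq, hxq⟩ := hx
  refine Finset.mem_image.mpr ⟨(ε m, q m), Finset.mem_product.mpr ⟨?_, ?_⟩, (hxq m).symm⟩
  · rcases hε m with h | h <;> simp [h]
  · exact Finset.mem_Ico.mpr (hq m)

lemma ncard_le_mul_of_injOn_grid3 {L d : Fin 3 → ℝ} {N : Fin 3 → ℕ}
    {S : Set (EuclideanSpace ℝ (Fin 3))} (hS : S ⊆ grid3 L d N) (i j : Fin 3)
    (hinj : S.InjOn fun p => (p i, p j)) :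
    S.ncard ≤ N i * N j := by
  have hmaps : S.MapsTo (fun p => (p i, p j))
      (gridCoords (L i) (d i) (N i) ×ˢ gridCoords (L j) (d j) (N j) : Finset (ℝ × ℝ)) :=
    fun p hp => by
      simpa using ⟨mem_gridCoords_of_mem_grid3 (hS hp) i, mem_gridCoords_of_mem_grid3 (hS hp) j⟩
  calc S.ncard ≤ (gridCoords (L i) (d i) (N i) ×ˢ gridCoords (L j) (d j) (N j)).card := by
        simpa only [Set.ncard_coe_finset] using Set.ncard_le_ncard_of_injOn _ hmaps hinj
    _ ≤ N i * N j := by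
        rw [Finset.card_product]
        exact Nat.mul_le_mul (card_gridCoords_le _ _ _) (card_gridCoords_le _ _ _)

lemma EuclideanSpace.eq_of_inner_eq_of_forall_ne {ι : Type*} [Fintype ι]
    {u p q : EuclideanSpace ℝ ι} {k : ι} (hk : u k ≠ 0) (h : ⟪u, p⟫ = ⟪u, q⟫)
    (hpq : ∀ i, i ≠ k → p i = q i) : p = q := by
  have hsum : ⟪u, p - q⟫ = (p k - q k) * u k := by
    rw [PiLp.inner_apply]
    refine Finset.sum_eq_single k (fun i _ hi => ?_) (by simp)
    simp [hpq i hi]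
  have hk' : p k = q k := by
    rw [inner_sub_right, h, sub_self] at hsum
    exact sub_eq_zero.mp ((mul_eq_zero.mp hsum.symm).resolve_right hk)
  ext i
  by_cases hi : i = k
  · exact hi ▸ hk'
  · exact hpq i hi

theorem plane_meets_grid_in_few_points_general (L d : Fin 3 → ℝ) (N : Fin 3 → ℕ)
    (u : EuclideanSpace ℝ (Fin 3)) (hu2 : u 1 ≠ 0) (hu3 : u 2 ≠ 0)
    (s : EuclideanSpace ℝ (Fin 3)) :
    ({p : EuclideanSpace ℝ (Fin 3) | ⟪u, p - s⟫ = 0} ∩ grid3 L d N).ncard ≤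
      N 0 * min (N 1) (N 2) := by
  set S := {p : EuclideanSpace ℝ (Fin 3) | ⟪u, p - s⟫ = 0} ∩ grid3 L d N
  have hinner : ∀ p ∈ S, ⟪u, p⟫ = ⟪u, s⟫ := fun p hp =>
    sub_eq_zero.mp ((inner_sub_right u p s).symm.trans hp.1)
  have hinj01 : S.InjOn fun p => (p 0, p 1) := fun p hp q hq hpq => by
    simp only [Prod.mk.injEq] at hpq
    refine EuclideanSpace.eq_of_inner_eq_of_forall_ne hu3 ((hinner p hp).trans (hinner q hq).symm)
      fun i hi => ?_
    fin_cases i <;> simp_all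
  have hinj02 : S.InjOn fun p => (p 0, p 2) := fun p hp q hq hpq => by
    simp only [Prod.mk.injEq] at hpq
    refine EuclideanSpace.eq_of_inner_eq_of_forall_ne hu2 ((hinner p hp).trans (hinner q hq).symm)
      fun i hi => ?_
    fin_cases i <;> simp_all
  rw [mul_min]
  exact le_min (ncard_le_mul_of_injOn_grid3 Set.inter_subset_right 0 1 hinj01)
    (ncard_le_mul_of_injOn_grid3 Set.inter_subset_right 0 2 hinj02)

/-- If `u` has nonzero second and third coordinates, any affine plane with normal `u`
contains at most `N₁ · min(N₂, N₃)` points of the grid. -/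
theorem plane_meets_grid_in_few_points (L d : Fin 3 → ℝ) (N : Fin 3 → ℕ)
    (hL : ∀ i, 0 < L i) (hd : ∀ i, 0 < d i ∧ d i < L i)
    (hN : ∀ i, 0 < N i ∧ Even (N i))
    (u : EuclideanSpace ℝ (Fin 3)) (hu2 : u 1 ≠ 0) (hu3 : u 2 ≠ 0)
    (s : EuclideanSpace ℝ (Fin 3)) :
    ({p : EuclideanSpace ℝ (Fin 3) | ⟪u, p - s⟫ = 0} ∩ grid3 L d N).ncard ≤
      N 0 * min (N 1) (N 2) :=
  plane_meets_grid_in_few_points_general L d N u hu2 hu3 s
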